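/- Let d ≥ 1, let f be a Schwartz function on ℝ^d, and let t ≠ 0. Then for every x ∈ ℝ^d, (U_0(t)f)(x) = (it)^{−d/2} e^{i|x|²/(2t)} · (2π)^{−d/2} ∫_{ℝ^d} e^{i|y|²/(2t)} f(y) e^{−i (x/t)·y} dy, where (it)^{−d/2} is taken with the principal branch. (This is the factorization U_0(t) = M_t D_t F M_t of the free Schrödinger group, where M_t is multiplication by e^{i|x|²/(2t)} and D_t is the dilation (D_t g)(x) = (it)^{−d/2} g(x/t).) -/

import Mathlib

open MeasureTheory Real Filter

noncomputable section

/-- Gradient of a complex-valued function on ℝ^d, as a ℂ^d-valued function. -/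
def gradC (d : ℕ) (f : EuclideanSpace ℝ (Fin d) → ℂ) (x : EuclideanSpace ℝ (Fin d)) :
    EuclideanSpace ℂ (Fin d) :=
  WithLp.toLp 2 (fun i => fderiv ℝ f x (EuclideanSpace.single i 1))

/-- Laplacian of a complex-valued function on ℝ^d. -/
def lapC (d : ℕ) (f : EuclideanSpace ℝ (Fin d) → ℂ) (x : EuclideanSpace ℝ (Fin d)) : ℂ :=
  ∑ i : Fin d, fderiv ℝ (fun y => fderiv ℝ f y (EuclideanSpace.single i 1)) x
    (EuclideanSpace.single i 1)

/-- L² norm. -/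
def L2 (d : ℕ) (f : EuclideanSpace ℝ (Fin d) → ℂ) : ℝ :=
  (∫ x, ‖f x‖ ^ 2) ^ ((1 : ℝ) / 2)

/-- Σ-norm: ‖f‖_{L²} + ‖∇f‖_{L²} + ‖|x|f‖_{L²}. -/
def sigmaNorm (d : ℕ) (f : EuclideanSpace ℝ (Fin d) → ℂ) : ℝ :=
  L2 d f + (∫ x, ‖gradC d f x‖ ^ 2) ^ ((1 : ℝ) / 2)
    + (∫ x, ‖x‖ ^ 2 * ‖f x‖ ^ 2) ^ ((1 : ℝ) / 2)

/-- Fourier transform with normalisation (2π)^{-d/2} ∫ f(x) e^{-i x·ξ} dx. -/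
def FT (d : ℕ) (f : EuclideanSpace ℝ (Fin d) → ℂ) (ξ : EuclideanSpace ℝ (Fin d)) : ℂ :=
  (((2 * π) ^ (-(d : ℝ) / 2) : ℝ) : ℂ) *
    ∫ x, f x * Complex.exp (-Complex.I * ((inner ℝ x ξ : ℝ) : ℂ))

/-- Inverse Fourier transform. -/
def FTinv (d : ℕ) (f : EuclideanSpace ℝ (Fin d) → ℂ) (x : EuclideanSpace ℝ (Fin d)) : ℂ :=
  (((2 * π) ^ (-(d : ℝ) / 2) : ℝ) : ℂ) *
    ∫ ξ, f ξ * Complex.exp (Complex.I * ((inner ℝ x ξ : ℝ) : ℂ))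

/-- Free Schrödinger group U₀(t) = e^{i t Δ/2}. -/
def U0 (d : ℕ) (t : ℝ) (f : EuclideanSpace ℝ (Fin d) → ℂ) :
    EuclideanSpace ℝ (Fin d) → ℂ :=
  FTinv d (fun ξ => Complex.exp (-Complex.I * (t : ℂ) * ((‖ξ‖ ^ 2 : ℝ) : ℂ) / 2) * FT d f ξ)

/-- Regular solution of the defocusing NLS with power σ. -/
def IsRegularSolution (d : ℕ) (σ : ℝ)
    (u : ℝ → SchwartzMap (EuclideanSpace ℝ (Fin d)) ℂ) : Prop :=
  (∀ x, ContDiff ℝ 1 (fun t => u t x)) ∧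
  ∀ t x, Complex.I * deriv (fun s => u s x) t + (1 / 2) * lapC d (⇑(u t)) x =
    ((‖u t x‖ ^ (2 * σ) : ℝ) : ℂ) * u t x

/-- Scattering in Σ to asymptotic states u₋ (at -∞) and u₊ (at +∞). -/
def ScattersTo (d : ℕ) (u : ℝ → SchwartzMap (EuclideanSpace ℝ (Fin d)) ℂ)
    (um up : SchwartzMap (EuclideanSpace ℝ (Fin d)) ℂ) : Prop :=
  Tendsto (fun t => sigmaNorm d (fun x => U0 d (-t) (⇑(u t)) x - um x)) atBot (nhds 0) ∧
  Tendsto (fun t => sigmaNorm d (fun x => U0 d (-t) (⇑(u t)) x - up x)) atTop (nhds 0)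

open Complex FourierTransform

private abbrev V (d : ℕ) := EuclideanSpace ℝ (Fin d)

variable {d : ℕ}

lemma FT_eq (f : V d → ℂ) (ξ : V d) :
    FT d f ξ = (((2 * π) ^ (-(d : ℝ) / 2) : ℝ) : ℂ) * 𝓕 f ((2 * π)⁻¹ • ξ) := by
  rw [FT, Real.fourier_eq']
  congr 1
  congr 1 with v
  rw [real_inner_smul_right, smul_eq_mul]
  rw [show (-2 * π * ((2*π)⁻¹ * (inner ℝ v ξ : ℝ))) = -(inner ℝ v ξ : ℝ) by
    field_simp]
  push_cast
  ring

lemma FT_integrable (f : SchwartzMap (V d) ℂ) : Integrable (FT d ⇑f) := by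
  have h1 : Integrable (𝓕 ⇑f) := by
    rw [← SchwartzMap.fourier_coe]
    exact (SchwartzMap.fourierTransformCLM ℂ f).integrable
  have h2 : Integrable (fun ξ : V d => 𝓕 ⇑f ((2 * π)⁻¹ • ξ)) := by
    apply (integrable_comp_smul_iff volume (𝓕 ⇑f) _).2 h1
    simp [pi_ne_zero]
  simp_rw [funext (FT_eq ⇑f)]
  exact h2.const_mul _

lemma FT_continuous (f : SchwartzMap (V d) ℂ) : Continuous (FT d ⇑f) := by
  have h1 : Continuous (𝓕 ⇑f) :=
    VectorFourier.fourierIntegral_continuous Real.continuous_fourierChar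
      (by exact continuous_inner) f.integrable
  simp_rw [funext (FT_eq ⇑f)]
  exact continuous_const.mul (h1.comp (continuous_const_smul (2 * π)⁻¹))

lemma key_fubini (f : SchwartzMap (V d) ℂ) (x : V d) (z : ℂ) (hz : 0 < z.re) :
    ∫ ξ : V d, Complex.exp (-(z * ((‖ξ‖^2 : ℝ) : ℂ)) / 2) * FT d ⇑f ξ
        * Complex.exp (Complex.I * ((inner ℝ x ξ : ℝ) : ℂ))
      = (((2 * π) ^ (-(d : ℝ) / 2) : ℝ) : ℂ) * ((π / (z/2)) ^ ((d : ℂ)/2)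
          * ∫ y : V d, f y * Complex.exp (-((‖x - y‖^2 : ℝ) : ℂ) / (2*z))) := by
  set c : ℂ := (((2 * π) ^ (-(d : ℝ) / 2) : ℝ) : ℂ) with hc
  have hzre2 : 0 < (z/2).re := by
    rw [Complex.div_re]; simp; positivity
  -- step 1: rewrite integrand as c * ∫ y, H ξ y
  have step1 : ∀ ξ : V d,
      Complex.exp (-(z * ((‖ξ‖^2 : ℝ) : ℂ)) / 2) * FT d ⇑f ξ
        * Complex.exp (Complex.I * ((inner ℝ x ξ : ℝ) : ℂ))
      = c * ∫ y : V d, Complex.exp (-(z/2) * ((‖ξ‖^2 : ℝ) : ℂ)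
          + Complex.I * ((inner ℝ (x - y) ξ : ℝ) : ℂ)) * f y := by
    intro ξ
    rw [FT]
    rw [show Complex.exp (-(z * ((‖ξ‖^2 : ℝ) : ℂ)) / 2) *
        (c * ∫ v : V d, f v * Complex.exp (-Complex.I * ((inner ℝ v ξ : ℝ) : ℂ)))
        * Complex.exp (Complex.I * ((inner ℝ x ξ : ℝ) : ℂ))
      = c * ((Complex.exp (-(z * ((‖ξ‖^2 : ℝ) : ℂ)) / 2) *
          (∫ v : V d, f v * Complex.exp (-Complex.I * ((inner ℝ v ξ : ℝ) : ℂ))))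
          * Complex.exp (Complex.I * ((inner ℝ x ξ : ℝ) : ℂ))) by ring]
    congr 1
    rw [← integral_const_mul, ← integral_mul_const]
    congr 1 with y
    rw [show Complex.exp (-(z * ((‖ξ‖^2:ℝ):ℂ)) / 2) *
        (f y * Complex.exp (-Complex.I * ((inner ℝ y ξ : ℝ):ℂ)))
        * Complex.exp (Complex.I * ((inner ℝ x ξ : ℝ):ℂ))
      = Complex.exp (-(z * ((‖ξ‖^2:ℝ):ℂ)) / 2) * Complex.exp (-Complex.I * ((inner ℝ y ξ : ℝ):ℂ))
        * Complex.exp (Complex.I * ((inner ℝ x ξ : ℝ):ℂ)) * f y by ring]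
    rw [← Complex.exp_add, ← Complex.exp_add]
    congr 2
    have : (inner ℝ (x - y) ξ : ℝ) = (inner ℝ x ξ : ℝ) - (inner ℝ y ξ : ℝ) := inner_sub_left x y ξ
    rw [this]
    push_cast
    ring
  rw [integral_congr_ae (Filter.Eventually.of_forall step1)]
  rw [integral_const_mul]
  congr 1
  -- step 2: Fubini
  have hint : Integrable (Function.uncurry fun (ξ : V d) (y : V d) =>
      Complex.exp (-(z/2) * ((‖ξ‖^2 : ℝ) : ℂ)
          + Complex.I * ((inner ℝ (x - y) ξ : ℝ) : ℂ)) * f y) (volume.prod volume) := by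
    have hG : Integrable (fun p : V d × V d =>
        Complex.exp (-(z/2) * ((‖p.1‖^2 : ℝ) : ℂ)) * f p.2) (volume.prod volume) := by
      have h1 : Integrable (fun ξ : V d => Complex.exp (-(z/2) * ((‖ξ‖^2 : ℝ) : ℂ))) := by
        have := GaussianFourier.integrable_cexp_neg_mul_sq_norm_add (V := V d) hzre2 0 (0 : V d)
        simpa using this
      exact h1.mul_prod f.integrable
    apply hG.norm.mono'
    · apply Continuous.aestronglyMeasurable
      apply Continuous.mul _ (f.continuous.comp continuous_snd)
      apply Complex.continuous_exp.comp
      apply Continuous.add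
      · exact (continuous_const.mul (Complex.continuous_ofReal.comp
          ((continuous_fst.norm).pow 2)))
      · exact (continuous_const.mul (Complex.continuous_ofReal.comp
          ((continuous_const.sub continuous_snd).inner continuous_fst)))
    · refine Filter.Eventually.of_forall (fun p => ?_)
      obtain ⟨ξ, y⟩ := p
      simp only [Function.uncurry_apply_pair, norm_norm, norm_mul]
      gcongr
      rw [Complex.norm_exp, Complex.norm_exp]
      apply Real.exp_le_exp.2
      simp [Complex.add_re, Complex.mul_re]
  rw [MeasureTheory.integral_integral_swap hint]
  -- step 3: inner ℝ Gaussian integral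
  have step3 : ∀ y : V d,
      (∫ ξ : V d, Complex.exp (-(z/2) * ((‖ξ‖^2 : ℝ) : ℂ)
          + Complex.I * ((inner ℝ (x - y) ξ : ℝ) : ℂ)) * f y)
      = ((π / (z/2)) ^ ((d : ℂ)/2) * Complex.exp (-((‖x - y‖^2 : ℝ) : ℂ) / (2*z))) * f y := by
    intro y
    rw [integral_mul_const]
    congr 1
    have := GaussianFourier.integral_cexp_neg_mul_sq_norm_add (V := V d) hzre2 Complex.I (x - y)
    simp only [finrank_euclideanSpace, Fintype.card_fin] at this
    push_cast at this ⊢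
    rw [this]
    congr 1
    have hz0 : z ≠ 0 := fun h => by simp [h] at hz
    rw [Complex.I_sq]
    field_simp
    ring
  rw [integral_congr_ae (Filter.Eventually.of_forall step3)]
  simp_rw [mul_assoc]
  rw [integral_const_mul]
  congr 1
  refine integral_congr_ae (Filter.Eventually.of_forall fun y => ?_)
  rw [mul_comm]
  congr 2
  ring

lemma norm_cexp_A {z : ℂ} (hz : 0 ≤ z.re) {r : ℝ} (hr : 0 ≤ r) :
    ‖Complex.exp (-(z * (r:ℂ)) / 2)‖ ≤ 1 := by
  rw [Complex.norm_exp, Real.exp_le_one_iff,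
    show -(z * (r:ℂ)) / 2 = z * ((-(r/2) : ℝ) : ℂ) by push_cast; ring]
  have : (z * ((-(r/2) : ℝ) : ℂ)).re = z.re * (-(r/2)) := by
    simp [Complex.mul_re]
  rw [this]
  nlinarith

lemma norm_cexp_B {z : ℂ} (hz : 0 ≤ z.re) {r : ℝ} (hr : 0 ≤ r) :
    ‖Complex.exp (-((r:ℝ) : ℂ) / (2 * z))‖ ≤ 1 := by
  rw [Complex.norm_exp, Real.exp_le_one_iff, div_eq_mul_inv,
    show -((r:ℝ):ℂ) = ((-r : ℝ) : ℂ) by push_cast; ring]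
  have h1 : ((( -r : ℝ) : ℂ) * (2*z)⁻¹).re = -r * (2*z)⁻¹.re := by
    simp [Complex.mul_re]
  rw [h1]
  have h2 : 0 ≤ (2*z)⁻¹.re := by
    rw [Complex.inv_re]
    apply div_nonneg _ (Complex.normSq_nonneg _)
    simp; linarith
  nlinarith

lemma tendsto_T1 (f : SchwartzMap (V d) ℂ) (x : V d) (t : ℝ) :
    Tendsto (fun ε : ℝ => ∫ ξ : V d,
        Complex.exp (-((((ε:ℝ):ℂ) + Complex.I * (t:ℂ)) * ((‖ξ‖^2 : ℝ) : ℂ)) / 2) * FT d ⇑f ξ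
          * Complex.exp (Complex.I * ((inner ℝ x ξ : ℝ) : ℂ)))
      (nhdsWithin 0 (Set.Ioi 0))
      (nhds (∫ ξ : V d,
        Complex.exp (-((Complex.I * (t:ℂ)) * ((‖ξ‖^2 : ℝ) : ℂ)) / 2) * FT d ⇑f ξ
          * Complex.exp (Complex.I * ((inner ℝ x ξ : ℝ) : ℂ)))) := by
  apply tendsto_integral_filter_of_dominated_convergence (fun ξ => ‖FT d ⇑f ξ‖)
  · refine Filter.Eventually.of_forall (fun ε => Continuous.aestronglyMeasurable ?_)
    have hinner : Continuous (fun ξ : V d => Complex.I * ((inner ℝ x ξ : ℝ) : ℂ)) :=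
      continuous_const.mul (Complex.continuous_ofReal.comp (continuous_const.inner continuous_id))
    apply Continuous.mul
    apply Continuous.mul
    · exact Complex.continuous_exp.comp (by continuity)
    · exact FT_continuous f
    · exact Complex.continuous_exp.comp hinner
  · filter_upwards [self_mem_nhdsWithin] with ε (hε : ε > 0)
    refine Filter.Eventually.of_forall (fun ξ => ?_)
    rw [norm_mul, norm_mul]
    have h1 : ‖Complex.exp (-((((ε:ℝ):ℂ) + Complex.I * (t:ℂ)) * ((‖ξ‖^2 : ℝ) : ℂ)) / 2)‖ ≤ 1 := by
      apply norm_cexp_A _ (by positivity)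
      simp [hε.le]
    have h2 : ‖Complex.exp (Complex.I * ((inner ℝ x ξ : ℝ) : ℂ))‖ = 1 := by
      rw [Complex.norm_exp]
      simp [Complex.mul_re]
    rw [h2]
    nlinarith [norm_nonneg (FT d ⇑f ξ), norm_nonneg (Complex.exp (-((((ε:ℝ):ℂ) + Complex.I * (t:ℂ)) * ((‖ξ‖^2 : ℝ) : ℂ)) / 2))]
  · exact (FT_integrable f).norm
  · refine Filter.Eventually.of_forall (fun ξ => ?_)
    have hc : Continuous (fun ε : ℝ =>
        Complex.exp (-((((ε:ℝ):ℂ) + Complex.I * (t:ℂ)) * ((‖ξ‖^2 : ℝ) : ℂ)) / 2) * FT d ⇑f ξ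
          * Complex.exp (Complex.I * ((inner ℝ x ξ : ℝ) : ℂ))) := by
      apply Continuous.mul _ continuous_const
      apply Continuous.mul _ continuous_const
      exact Complex.continuous_exp.comp (by continuity)
    have := (hc.tendsto 0).mono_left (nhdsWithin_le_nhds (s := Set.Ioi (0:ℝ)))
    simpa using this

lemma tendsto_T2 (f : SchwartzMap (V d) ℂ) (x : V d) {t : ℝ} (ht : t ≠ 0) :
    Tendsto (fun ε : ℝ => ∫ y : V d,
        f y * Complex.exp (-((‖x - y‖^2 : ℝ) : ℂ) / (2 * (((ε:ℝ):ℂ) + Complex.I * (t:ℂ)))))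
      (nhdsWithin 0 (Set.Ioi 0))
      (nhds (∫ y : V d,
        f y * Complex.exp (-((‖x - y‖^2 : ℝ) : ℂ) / (2 * (Complex.I * (t:ℂ)))))) := by
  apply tendsto_integral_filter_of_dominated_convergence (fun y => ‖f y‖)
  · refine Filter.Eventually.of_forall (fun ε => Continuous.aestronglyMeasurable ?_)
    exact f.continuous.mul (Complex.continuous_exp.comp (by fun_prop))
  · filter_upwards [self_mem_nhdsWithin] with ε (hε : ε > 0)
    refine Filter.Eventually.of_forall (fun y => ?_)
    rw [norm_mul]
    have h1 : ‖Complex.exp (-((‖x - y‖^2 : ℝ) : ℂ) / (2 * (((ε:ℝ):ℂ) + Complex.I * (t:ℂ))))‖ ≤ 1 := by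
      apply norm_cexp_B _ (by positivity)
      simp [hε.le]
    nlinarith [norm_nonneg (f y), norm_nonneg (Complex.exp (-((‖x - y‖^2 : ℝ) : ℂ) / (2 * (((ε:ℝ):ℂ) + Complex.I * (t:ℂ)))))]
  · exact f.integrable.norm
  · refine Filter.Eventually.of_forall (fun y => ?_)
    have hne : (2 * (((0:ℝ):ℂ) + Complex.I * (t:ℂ))) ≠ 0 := by
      simp [Complex.I_ne_zero, ht]
    have hc : ContinuousAt (fun ε : ℝ =>
        f y * Complex.exp (-((‖x - y‖^2 : ℝ) : ℂ) / (2 * (((ε:ℝ):ℂ) + Complex.I * (t:ℂ))))) 0 := by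
      apply ContinuousAt.mul continuousAt_const
      apply Complex.continuous_exp.continuousAt.comp
      exact ContinuousAt.div continuousAt_const (by fun_prop) hne
    have := hc.tendsto.mono_left (nhdsWithin_le_nhds (s := Set.Ioi (0:ℝ)))
    simpa using this

lemma cpow_real_mul {r : ℝ} (hr : 0 < r) {w : ℂ} (hw : w ≠ 0) (s : ℂ) :
    ((r:ℂ) * w) ^ s = (r:ℂ) ^ s * w ^ s := by
  rw [Complex.cpow_def_of_ne_zero (mul_ne_zero (Complex.ofReal_ne_zero.2 hr.ne') hw),
    Complex.cpow_def_of_ne_zero (Complex.ofReal_ne_zero.2 hr.ne'),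
    Complex.cpow_def_of_ne_zero hw, ← Complex.exp_add,
    Complex.log_ofReal_mul hr hw]
  congr 1
  rw [Complex.ofReal_log hr.le]
  ring

lemma tendsto_T3 {t : ℝ} (ht : t ≠ 0) (d : ℕ) :
    Tendsto (fun ε : ℝ => ((π:ℂ) / ((((ε:ℝ):ℂ) + Complex.I * (t:ℂ))/2)) ^ ((d:ℂ)/2))
      (nhdsWithin 0 (Set.Ioi 0))
      (nhds (((π:ℂ) / ((Complex.I * (t:ℂ))/2)) ^ ((d:ℂ)/2))) := by
  have hIt : Complex.I * (t:ℂ) ≠ 0 := by simp [Complex.I_ne_zero, ht]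
  have hne : ((((0:ℝ):ℂ) + Complex.I * (t:ℂ))/2) ≠ 0 := by
    simp [Complex.I_ne_zero, ht]
  have hbase : ContinuousAt (fun ε : ℝ => (π:ℂ) / ((((ε:ℝ):ℂ) + Complex.I * (t:ℂ))/2)) 0 :=
    ContinuousAt.div continuousAt_const (by fun_prop) hne
  have hslit : (π:ℂ) / ((((0:ℝ):ℂ) + Complex.I * (t:ℂ))/2) ∈ Complex.slitPlane := by
    rw [Complex.mem_slitPlane_iff]
    right
    rw [show (π:ℂ) / ((((0:ℝ):ℂ) + Complex.I * (t:ℂ))/2) = (π:ℂ) * ((((0:ℝ):ℂ) + Complex.I * (t:ℂ))/2)⁻¹ by ring]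
    rw [Complex.mul_im]
    have h2 : ((((0:ℝ):ℂ) + Complex.I * (t:ℂ))/2)⁻¹.im = -(t/2) / ((t/2)^2) := by
      rw [Complex.inv_im]
      congr 1
      · simp
      · simp [Complex.normSq_apply]; ring
    rw [h2]
    simp [pi_ne_zero, ht]
  have hT : ContinuousAt (fun ε : ℝ => ((π:ℂ) / ((((ε:ℝ):ℂ) + Complex.I * (t:ℂ))/2)) ^ ((d:ℂ)/2)) 0 :=
    hbase.cpow (continuousAt_const (y := ((d:ℂ)/2))) hslit
  have := hT.tendsto.mono_left (nhdsWithin_le_nhds (s := Set.Ioi (0:ℝ)))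
  simpa using this

/-- the factorization U₀(t) = M_t D_t F M_t of the free Schrödinger group. -/
theorem free_schrodinger_factorization (d : ℕ) (hd : 1 ≤ d)
    (f : SchwartzMap (EuclideanSpace ℝ (Fin d)) ℂ) (t : ℝ) (ht : t ≠ 0) :
    ∀ x, U0 d t ⇑f x =
      (Complex.I * (t : ℂ)) ^ (-(d : ℂ) / 2)
        * Complex.exp (Complex.I * ((‖x‖ ^ 2 / (2 * t) : ℝ) : ℂ))
        * ((((2 * π) ^ (-(d : ℝ) / 2) : ℝ) : ℂ)
          * ∫ y, Complex.exp (Complex.I * ((‖y‖ ^ 2 / (2 * t) : ℝ) : ℂ)) * f y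
              * Complex.exp (-Complex.I * ((inner ℝ (t⁻¹ • x) y : ℝ) : ℂ))) := by
  intro x
  set c : ℂ := (((2 * π) ^ (-(d : ℝ) / 2) : ℝ) : ℂ) with hcdef
  have hIt : Complex.I * (t:ℂ) ≠ 0 := by simp [Complex.I_ne_zero, ht]
  -- Step 0: unfold U0
  have hU : U0 d t ⇑f x = c *
      ∫ ξ : V d, Complex.exp (-((Complex.I * (t:ℂ)) * ((‖ξ‖^2 : ℝ):ℂ)) / 2) * FT d ⇑f ξ
        * Complex.exp (Complex.I * ((inner ℝ x ξ : ℝ):ℂ)) := by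
    rw [U0, FTinv]
    congr 1
    refine integral_congr_ae (Filter.Eventually.of_forall fun ξ => ?_)
    simp only [neg_mul]
  -- limits
  have heq : ∀ᶠ ε : ℝ in nhdsWithin 0 (Set.Ioi 0),
      (∫ ξ : V d, Complex.exp (-((((ε:ℝ):ℂ) + Complex.I * (t:ℂ)) * ((‖ξ‖^2 : ℝ):ℂ)) / 2)
          * FT d ⇑f ξ * Complex.exp (Complex.I * ((inner ℝ x ξ : ℝ):ℂ)))
      = c * (((π:ℂ) / ((((ε:ℝ):ℂ) + Complex.I * (t:ℂ))/2)) ^ ((d:ℂ)/2)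
          * ∫ y : V d, f y * Complex.exp (-((‖x - y‖^2 : ℝ):ℂ)
              / (2 * (((ε:ℝ):ℂ) + Complex.I * (t:ℂ))))) := by
    filter_upwards [self_mem_nhdsWithin] with ε (hε : ε > 0)
    exact key_fubini f x _ (by simpa using hε)
  have lim1 := (tendsto_T1 f x t).congr' heq
  have lim2 := (((tendsto_T3 ht d).mul (tendsto_T2 f x ht))).const_mul c
  have hkey := tendsto_nhds_unique lim1 lim2
  rw [hU, hkey]
  -- rewrite the Fresnel integral
  have hQ : (∫ y : V d, f y * Complex.exp (-((‖x - y‖^2 : ℝ):ℂ) / (2 * (Complex.I * (t:ℂ)))))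
      = Complex.exp (Complex.I * ((‖x‖ ^ 2 / (2 * t) : ℝ) : ℂ))
        * ∫ y : V d, Complex.exp (Complex.I * ((‖y‖ ^ 2 / (2 * t) : ℝ) : ℂ)) * f y
            * Complex.exp (-Complex.I * ((inner ℝ (t⁻¹ • x) y : ℝ) : ℂ)) := by
    rw [← integral_const_mul]
    refine integral_congr_ae (Filter.Eventually.of_forall fun y => ?_)
    beta_reduce
    rw [show Complex.exp (Complex.I * ((‖x‖ ^ 2 / (2 * t) : ℝ) : ℂ))
        * (Complex.exp (Complex.I * ((‖y‖ ^ 2 / (2 * t) : ℝ) : ℂ)) * f y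
            * Complex.exp (-Complex.I * ((inner ℝ (t⁻¹ • x) y : ℝ) : ℂ)))
      = Complex.exp (Complex.I * ((‖x‖ ^ 2 / (2 * t) : ℝ) : ℂ))
        * Complex.exp (Complex.I * ((‖y‖ ^ 2 / (2 * t) : ℝ) : ℂ))
        * Complex.exp (-Complex.I * ((inner ℝ (t⁻¹ • x) y : ℝ) : ℂ)) * f y by ring]
    rw [← Complex.exp_add, ← Complex.exp_add, mul_comm]
    congr 2
    have hns : (‖x - y‖^2 : ℝ) = ‖x‖^2 - 2 * (inner ℝ x y : ℝ) + ‖y‖^2 := norm_sub_sq_real x y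
    have hsm : ((inner ℝ (t⁻¹ • x) y : ℝ)) = t⁻¹ * (inner ℝ x y : ℝ) := real_inner_smul_left x y t⁻¹
    rw [hns, hsm]
    push_cast
    have htC : (t:ℂ) ≠ 0 := Complex.ofReal_ne_zero.2 ht
    field_simp
    ring_nf
    simp [Complex.I_sq]
    ring
  rw [hQ]
  -- prefactor algebra
  have harg : (Complex.I * (t:ℂ)).arg ≠ π := by
    intro h
    rw [Complex.arg_eq_pi_iff] at h
    simp [ht] at h
  have hcP : c * ((π:ℂ) / ((Complex.I * (t:ℂ))/2)) ^ ((d:ℂ)/2)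
      = (Complex.I * (t:ℂ)) ^ (-(d:ℂ) / 2) := by
    have h1 : (π:ℂ) / ((Complex.I * (t:ℂ))/2) = (((2*π : ℝ)):ℂ) * (Complex.I * (t:ℂ))⁻¹ := by
      push_cast
      field_simp
    rw [h1, cpow_real_mul (by positivity) (inv_ne_zero hIt),
      Complex.inv_cpow _ _ harg, ← Complex.cpow_neg]
    have hc2 : c = (((2*π : ℝ)):ℂ) ^ (-((d:ℂ))/2) := by
      rw [hcdef, Complex.ofReal_cpow (by positivity)]
      push_cast
      norm_num
    rw [hc2, ← mul_assoc, ← Complex.cpow_add _ _ (Complex.ofReal_ne_zero.2 (by positivity) : ((2*π:ℝ):ℂ) ≠ 0)]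
    rw [show -((d:ℂ))/2 + (d:ℂ)/2 = 0 by ring, Complex.cpow_zero, one_mul]
    congr 1
    ring
  rw [show c * (c * (((π:ℂ) / ((Complex.I * (t:ℂ))/2)) ^ ((d:ℂ)/2) * (Complex.exp (Complex.I * ((‖x‖ ^ 2 / (2 * t) : ℝ) : ℂ)) * ∫ y : V d, Complex.exp (Complex.I * ((‖y‖ ^ 2 / (2 * t) : ℝ) : ℂ)) * f y * Complex.exp (-Complex.I * ((inner ℝ (t⁻¹ • x) y : ℝ) : ℂ)))))
    = (c * ((π:ℂ) / ((Complex.I * (t:ℂ))/2)) ^ ((d:ℂ)/2)) * Complex.exp (Complex.I * ((‖x‖ ^ 2 / (2 * t) : ℝ) : ℂ)) * (c * ∫ y : V d, Complex.exp (Complex.I * ((‖y‖ ^ 2 / (2 * t) : ℝ) : ℂ)) * f y * Complex.exp (-Complex.I * ((inner ℝ (t⁻¹ • x) y : ℝ) : ℂ))) by ring]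
  rw [hcP]
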